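/- Let r ≥ 2 and n, ℓ ≥ 1 be integers, let P ∈ Δ([r]), and let Q_1, …, Q_{nℓ} ∈ Δ([r]). For each t ∈ [n], define R_t := Q_{(t−1)ℓ+1} * Q_{(t−1)ℓ+2} * ⋯ * Q_{tℓ} (modular convolution over [r]). Then H(P‖Q_1,…,Q_{nℓ}) ≤ H(P‖R_1,…,R_n). -/

import Mathlib

open scoped Classical BigOperators

noncomputable section

/-- `P` is a probability distribution on the finite type `α`. -/
def IsProbDist {α : Type*} [Fintype α] (P : α → ℝ) : Prop :=
  (∀ x, 0 ≤ P x) ∧ ∑ x, P x = 1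

/-- Shannon conditional entropy `H(X | Y)` of a joint pmf `π`
(first coordinate `X`, second coordinate `Y`), with the convention `0 log 0 = 0`. -/
def condEnt {α β : Type*} [Fintype α] [Fintype β] (π : α → β → ℝ) : ℝ :=
  - ∑ y : β, ∑ x : α, π x y * Real.log (π x y / ∑ x' : α, π x' y)

/-- `π` is a joint distribution of `(X, (Y_i)_{i : ι})` with `X ∼ P` and `Y_i ∼ Q i`. -/
def IsCouplingList {α ι : Type*} {β : ι → Type*} [Fintype α] [Fintype ι]
    [∀ i, Fintype (β i)] (π : α → ((i : ι) → β i) → ℝ)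
    (P : α → ℝ) (Q : (i : ι) → β i → ℝ) : Prop :=
  (∀ x y, 0 ≤ π x y) ∧ (∀ x, ∑ y, π x y = P x) ∧
    (∀ i b, (∑ x, ∑ y, if y i = b then π x y else 0) = Q i b)

/-- Minimum list entropy coupling `H(P ‖ Q_1, …, Q_m)`: the infimum of the
conditional entropy `H(X | Y_1, …, Y_m)` over all couplings with `X ∼ P`, `Y_i ∼ Q i`. -/
def Hlist {α ι : Type*} {β : ι → Type*} [Fintype α] [Fintype ι] [∀ i, Fintype (β i)]
    (P : α → ℝ) (Q : (i : ι) → β i → ℝ) : ℝ :=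
  sInf {h | ∃ π : α → ((i : ι) → β i) → ℝ, IsCouplingList π P Q ∧ condEnt π = h}

/-- Homogeneous minimum list entropy coupling `H_m(P ‖ Q)`. -/
def Hm {α β : Type*} [Fintype α] [Fintype β] (m : ℕ) (P : α → ℝ) (Q : β → ℝ) : ℝ :=
  Hlist (β := fun _ : Fin m => β) P (fun _ => Q)

/-- The modular convolution of the tuple of distributions `f 0, …, f (ℓ-1)` on `Fin r`:
the law of `Y_0 + ⋯ + Y_{ℓ-1}` (addition modulo `r`) for independent `Y_j ∼ f j`. -/
def mconvTuple {r ℓ : ℕ} [NeZero r] (f : Fin ℓ → Fin r → ℝ) : Fin r → ℝ :=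
  fun z => ∑ y : Fin ℓ → Fin r, if (∑ j, y j) = z then ∏ j, f j (y j) else 0

/-!
Given a coupling of `X` with block sums `Z_t ∼ R_t`, resample each block `(Y_{t,j})_j` from the
product law `∏_j Q_{(t,j)}` conditioned on its sum being `Z_t`, independently across blocks and
of `X` given `Z`. Each `Y_{t,j}` then has law `Q_{(t,j)}`, and since `Z` is a function of `Y` and
`X → Z → Y` is a Markov chain, `H(X | Y) = H(X | Z)`.
-/

open Finset

theorem condEnt_nonneg {α β : Type*} [Fintype α] [Fintype β] {π : α → β → ℝ}
    (hπ : ∀ x y, 0 ≤ π x y) : 0 ≤ condEnt π := by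
  rw [condEnt, neg_nonneg]
  refine sum_nonpos fun y _ => sum_nonpos fun x _ => mul_nonpos_of_nonneg_of_nonpos (hπ x y) ?_
  have hsum : 0 ≤ ∑ x', π x' y := sum_nonneg fun x' _ => hπ x' y
  exact Real.log_nonpos (div_nonneg (hπ x y) hsum)
    (div_le_one_of_le₀ (single_le_sum (fun x' _ => hπ x' y) (mem_univ x)) hsum)

-- The `Fintype` instances are implicit so that the lemma applies whichever (classical or
-- concrete) `DecidableEq` instance they were built from.
theorem condEnt_comp_equiv {α β γ : Type*} [Fintype α] {_ : Fintype β} {_ : Fintype γ}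
    (π : α → β → ℝ) (e : γ ≃ β) : condEnt (fun x y => π x (e y)) = condEnt π := by
  simp only [condEnt]
  exact congrArg Neg.neg (e.sum_comp fun y => ∑ x, π x y * Real.log (π x y / ∑ x', π x' y))

theorem sum_mul_const_mul_log_div_sum {α : Type*} [Fintype α] (p : α → ℝ) (c : ℝ) :
    ∑ x, p x * c * Real.log (p x * c / ∑ x', p x' * c)
      = (∑ x, p x * Real.log (p x / ∑ x', p x')) * c := by
  rcases eq_or_ne c 0 with rfl | hc
  · simp
  have hsum : ∑ x', p x' * c = (∑ x', p x') * c := (sum_mul ..).symm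
  simp_rw [hsum, mul_div_mul_right _ _ hc, sum_mul]
  exact sum_congr rfl fun x _ => by ring

theorem Hlist_le_Hlist_of_forall_coupling {α ι ι' : Type*} [Fintype α] [Fintype ι] [Fintype ι']
    {β : ι → Type*} {β' : ι' → Type*} [∀ i, Fintype (β i)] [∀ i, Fintype (β' i)]
    {P : α → ℝ} {Q : (i : ι) → β i → ℝ} {R : (i : ι') → β' i → ℝ}
    (hR : ∃ π, IsCouplingList π P R)
    (h : ∀ π', IsCouplingList π' P R → ∃ π, IsCouplingList π P Q ∧ condEnt π ≤ condEnt π') :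
    Hlist P Q ≤ Hlist P R := by
  obtain ⟨π₀, hπ₀⟩ := hR
  refine le_csInf ⟨_, π₀, hπ₀, rfl⟩ ?_
  rintro _ ⟨π', hπ', rfl⟩
  obtain ⟨π, hπ, hle⟩ := h π' hπ'
  have hbdd : BddBelow {h | ∃ π, IsCouplingList π P Q ∧ condEnt π = h} := by
    refine ⟨0, ?_⟩
    rintro _ ⟨π, hπ, rfl⟩
    exact condEnt_nonneg hπ.1
  exact (csInf_le hbdd ⟨π, hπ, rfl⟩).trans hle

theorem mul_prod_div_self_of_forall {ι : Type*} {s : Finset ι} {c : ι → ℝ} {a : ℝ}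
    (h : ∀ i ∈ s, c i = 0 → a = 0) : a * ∏ i ∈ s, c i / c i = a := by
  rcases eq_or_ne a 0 with rfl | ha
  · rw [zero_mul]
  rw [prod_congr rfl fun i hi => div_self fun hc => ha (h i hi hc), prod_const_one, mul_one]

theorem sum_ite_apply_prod {κ γ : Type*} [Fintype κ] [DecidableEq κ] [Fintype γ]
    (f : κ → γ → ℝ) (k : κ) (b : γ) :
    ∑ v : κ → γ, (if v k = b then ∏ j, f j (v j) else 0)
      = f k b * ∏ j ∈ univ.erase k, ∑ c, f j c := by
  set g : κ → γ → ℝ := fun j c => if j = k then (if c = b then f j c else 0) else f j c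
  have hg : ∀ v : κ → γ, (if v k = b then ∏ j, f j (v j) else 0) = ∏ j, g j (v j) := by
    intro v
    rw [← mul_prod_erase univ _ (mem_univ k), ← mul_prod_erase univ _ (mem_univ k),
      prod_congr rfl fun j hj => if_neg (ne_of_mem_erase hj)]
    simp only [g, if_true]
    split_ifs <;> simp
  rw [sum_congr rfl fun v _ => hg v, ← Fintype.prod_sum, ← mul_prod_erase univ _ (mem_univ k),
    prod_congr rfl fun j hj => sum_congr rfl fun c _ => if_neg (ne_of_mem_erase hj)]
  simp [g]

theorem sum_ite_apply_prod_of_isProbDist {κ γ : Type*} [Fintype κ] [DecidableEq κ] [Fintype γ]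
    {f : κ → γ → ℝ} (hf : ∀ j, IsProbDist (f j)) (k : κ) (b : γ) :
    ∑ v : κ → γ, (if v k = b then ∏ j, f j (v j) else 0) = f k b := by
  simp [sum_ite_apply_prod, fun j => (hf j).2]

theorem IsProbDist.pi {κ γ : Type*} [Fintype κ] [DecidableEq κ] [Fintype γ] {f : κ → γ → ℝ}
    (hf : ∀ j, IsProbDist (f j)) : IsProbDist fun v : κ → γ => ∏ j, f j (v j) :=
  ⟨fun v => prod_nonneg fun j _ => (hf j).1 _, by simp [← Fintype.prod_sum, fun j => (hf j).2]⟩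

namespace IsCouplingList

variable {α ι : Type*} [Fintype α] [Fintype ι] {β : ι → Type*} [∀ i, Fintype (β i)]
  {π : α → ((i : ι) → β i) → ℝ} {P : α → ℝ} {Q : (i : ι) → β i → ℝ}

theorem eq_zero_of_apply_eq_zero (hπ : IsCouplingList π P Q) {z : (i : ι) → β i} {i : ι}
    (hz : Q i (z i) = 0) (x : α) : π x z = 0 := by
  have hnn : ∀ x y, 0 ≤ if y i = z i then π x y else 0 := fun x y => by
    split_ifs
    exacts [hπ.1 x y, le_rfl]
  refine le_antisymm ?_ (hπ.1 x z)
  calc π x z = if z i = z i then π x z else 0 := (if_pos rfl).symm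
    _ ≤ ∑ y, if y i = z i then π x y else 0 := single_le_sum (fun y _ => hnn x y) (mem_univ z)
    _ ≤ ∑ x, ∑ y, if y i = z i then π x y else 0 :=
      single_le_sum (f := fun x => ∑ y, if y i = z i then π x y else 0)
        (fun x _ => sum_nonneg fun y _ => hnn x y) (mem_univ x)
    _ = 0 := (hπ.2.2 i (z i)).trans hz

theorem sum_sum_mul_apply (hπ : IsCouplingList π P Q) (i : ι) (φ : β i → ℝ) :
    ∑ z, (∑ x, π x z) * φ (z i) = ∑ c, Q i c * φ c := by
  simp only [← hπ.2.2 i, sum_mul, ite_mul, zero_mul]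
  rw [sum_comm, sum_comm (s := univ (α := β i))]
  refine sum_congr rfl fun x _ => ?_
  rw [sum_comm]
  exact sum_congr rfl fun z _ => by rw [sum_ite_eq]; simp

end IsCouplingList

theorem isCouplingList_prod {α ι γ : Type*} [Fintype α] [Fintype ι] [Fintype γ] {P : α → ℝ}
    {R : ι → γ → ℝ} (hP : IsProbDist P) (hR : ∀ i, IsProbDist (R i)) :
    IsCouplingList (β := fun _ : ι => γ) (fun x z => P x * ∏ i, R i (z i)) P R := by
  refine ⟨fun x z => mul_nonneg (hP.1 x) ((IsProbDist.pi hR).1 z), fun x => ?_, fun i b => ?_⟩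
  · rw [← mul_sum, (IsProbDist.pi hR).2, mul_one]
  · simp_rw [← mul_ite_zero, ← mul_sum, sum_ite_apply_prod_of_isProbDist hR, ← sum_mul, hP.2,
      one_mul]

theorem IsCouplingList.curry {α ι κ γ : Type*} [Fintype α] [Fintype ι] [Fintype κ]
    [DecidableEq κ] [Fintype γ]
    {π : α → (ι → κ → γ) → ℝ} {P : α → ℝ} {q : ι → (κ → γ) → ℝ} {Q : ι × κ → γ → ℝ}
    (hπ : IsCouplingList (β := fun _ : ι => κ → γ) π P q)
    (hq : ∀ i j c, ∑ v : κ → γ, (if v j = c then q i v else 0) = Q (i, j) c) :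
    IsCouplingList (β := fun _ : ι × κ => γ) (fun x y => π x (Function.curry y)) P Q := by
  refine ⟨fun x y => hπ.1 x _, fun x => ?_, fun ⟨i, j⟩ c => ?_⟩
  · rw [← hπ.2.1 x]
    exact sum_equiv (Equiv.curry ι κ γ) (by simp) fun _ _ => rfl
  · refine (sum_congr rfl fun x _ => sum_equiv (t := univ) (Equiv.curry ι κ γ) (by simp)
      (g := fun u => if u i j = c then π x u else 0) fun _ _ => rfl).trans ?_
    calc ∑ x, ∑ u : ι → κ → γ, (if u i j = c then π x u else 0)
        = ∑ u : ι → κ → γ, (∑ x, π x u) * (if u i j = c then 1 else 0) := by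
          rw [sum_comm]
          refine sum_congr rfl fun u _ => ?_
          split_ifs <;> simp
      _ = ∑ v, q i v * (if v j = c then 1 else 0) :=
          hπ.sum_sum_mul_apply i fun v => if v j = c then 1 else 0
      _ = Q (i, j) c := by simp only [mul_ite, mul_one, mul_zero, hq]

section Lift

variable {α ι V W : Type*} [Fintype α] [Fintype ι] [Fintype V]

def pushforward (σ : V → W) (q : V → ℝ) (c : W) : ℝ :=
  ∑ v, if σ v = c then q v else 0

-- Identically zero on a null fibre.
def condOnFiber (σ : V → W) (q : V → ℝ) (c : W) (v : V) : ℝ :=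
  if σ v = c then q v / pushforward σ q c else 0

theorem le_pushforward {q : V → ℝ} (hq : ∀ v, 0 ≤ q v) (σ : V → W) (v : V) :
    q v ≤ pushforward σ q (σ v) := by
  have hnn : ∀ v', 0 ≤ if σ v' = σ v then q v' else 0 := fun v' => by
    split_ifs
    exacts [hq v', le_rfl]
  simpa [pushforward] using single_le_sum (fun v' _ => hnn v') (mem_univ v)

theorem condOnFiber_nonneg {q : V → ℝ} (hq : ∀ v, 0 ≤ q v) (σ : V → W) (c : W) (v : V) :
    0 ≤ condOnFiber σ q c v := by
  unfold condOnFiber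
  split_ifs with h
  · exact div_nonneg (hq v) (h ▸ (hq v).trans (le_pushforward hq σ v))
  · exact le_rfl

theorem sum_condOnFiber (σ : V → W) (q : V → ℝ) (c : W) :
    ∑ v, condOnFiber σ q c v = pushforward σ q c / pushforward σ q c := by
  have h : ∀ v, condOnFiber σ q c v = (if σ v = c then q v else 0) / pushforward σ q c :=
    fun v => by rw [condOnFiber, ite_div, zero_div]
  rw [sum_congr rfl fun v _ => h v, ← sum_div, pushforward]

variable [Fintype W]

theorem sum_pushforward (σ : V → W) (q : V → ℝ) : ∑ c, pushforward σ q c = ∑ v, q v := by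
  unfold pushforward
  rw [sum_comm]
  exact sum_congr rfl fun v _ => by rw [sum_ite_eq]; simp

theorem IsProbDist.pushforward {q : V → ℝ} (hq : IsProbDist q) (σ : V → W) :
    IsProbDist (pushforward σ q) := by
  refine ⟨fun c => sum_nonneg fun v _ => ?_, (sum_pushforward σ q).trans hq.2⟩
  split_ifs
  exacts [hq.1 v, le_rfl]

theorem sum_pushforward_mul_condOnFiber {q : V → ℝ} (hq : ∀ v, 0 ≤ q v) (σ : V → W) (v : V) :
    ∑ c, pushforward σ q c * condOnFiber σ q c v = q v := by
  rw [sum_eq_single (σ v) (fun c _ hc => by simp [condOnFiber, Ne.symm hc]) (by simp)]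
  simp only [condOnFiber, if_true]
  rcases eq_or_ne (pushforward σ q (σ v)) 0 with h | h
  · rw [h, zero_mul]
    exact (le_antisymm ((le_pushforward hq σ v).trans h.le) (hq v)).symm
  · exact mul_div_cancel₀ _ h

/-- Given `(X, Z) ∼ π`, draw each `U i` from `q i` conditioned on `σ (U i) = Z i`,
independently given `Z`; this is the law of `(X, U)`. -/
def liftCoupling (σ : V → W) (q : ι → V → ℝ) (π : α → (ι → W) → ℝ) (x : α) (u : ι → V) : ℝ :=
  ∑ z, π x z * ∏ i, condOnFiber σ (q i) (z i) (u i)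

variable (σ : V → W) (q : ι → V → ℝ)

theorem sum_mul_prod_condOnFiber (F : (ι → W) → ℝ) (u : ι → V) :
    ∑ z, F z * ∏ i, condOnFiber σ (q i) (z i) (u i)
      = F (fun i => σ (u i)) * ∏ i, condOnFiber σ (q i) (σ (u i)) (u i) := by
  refine sum_eq_single _ (fun z _ hz => ?_) (by simp)
  obtain ⟨i, hi⟩ := Function.ne_iff.1 hz
  rw [prod_eq_zero (mem_univ i) (by simp [condOnFiber, Ne.symm hi]), mul_zero]

theorem sum_sum_mul_prod_condOnFiber (F : (ι → W) → ℝ)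
    (hF : ∀ z i, pushforward σ (q i) (z i) = 0 → F z = 0) :
    ∑ u : ι → V, ∑ z, F z * ∏ i, condOnFiber σ (q i) (z i) (u i) = ∑ z, F z := by
  rw [sum_comm]
  refine sum_congr rfl fun z _ => ?_
  rw [← mul_sum, ← Fintype.prod_sum fun i => condOnFiber σ (q i) (z i)]
  simp_rw [sum_condOnFiber]
  exact mul_prod_div_self_of_forall fun i _ => hF z i

theorem sum_ite_apply_sum_mul_prod_condOnFiber (F : (ι → W) → ℝ) (i₀ : ι) (b : V) :
    ∑ u : ι → V, (if u i₀ = b then ∑ z, F z * ∏ i, condOnFiber σ (q i) (z i) (u i) else 0)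
      = ∑ z, F z * (condOnFiber σ (q i₀) (z i₀) b *
          ∏ i ∈ univ.erase i₀, pushforward σ (q i) (z i) / pushforward σ (q i) (z i)) := by
  have h : ∀ u : ι → V, (if u i₀ = b then ∑ z, F z * ∏ i, condOnFiber σ (q i) (z i) (u i) else 0)
      = ∑ z, F z * (if u i₀ = b then ∏ i, condOnFiber σ (q i) (z i) (u i) else 0) := fun u => by
    split_ifs <;> simp
  rw [sum_congr rfl fun u _ => h u, sum_comm]
  refine sum_congr rfl fun z _ => ?_
  rw [← mul_sum, sum_ite_apply_prod fun i => condOnFiber σ (q i) (z i)]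
  simp_rw [sum_condOnFiber]

theorem isCouplingList_liftCoupling {P : α → ℝ} {π : α → (ι → W) → ℝ} (hq : ∀ i v, 0 ≤ q i v)
    (hπ : IsCouplingList (β := fun _ : ι => W) π P fun i => pushforward σ (q i)) :
    IsCouplingList (β := fun _ : ι => V) (liftCoupling σ q π) P q := by
  have hF : ∀ x z i, pushforward σ (q i) (z i) = 0 → π x z = 0 :=
    fun x z i h => hπ.eq_zero_of_apply_eq_zero h x
  refine ⟨fun x u => sum_nonneg fun z _ => mul_nonneg (hπ.1 x z)
    (prod_nonneg fun i _ => condOnFiber_nonneg (hq i) σ _ _), fun x => ?_, fun i b => ?_⟩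
  · rw [← hπ.2.1 x]
    exact sum_sum_mul_prod_condOnFiber σ q (π x) (hF x)
  · calc ∑ x, ∑ u, (if u i = b then liftCoupling σ q π x u else 0)
        = ∑ x, ∑ z, π x z * condOnFiber σ (q i) (z i) b := by
          refine sum_congr rfl fun x _ => ?_
          simp only [liftCoupling]
          rw [sum_ite_apply_sum_mul_prod_condOnFiber]
          refine sum_congr rfl fun z _ => ?_
          rw [mul_left_comm, mul_prod_div_self_of_forall fun j _ => hF x z j, mul_comm]
      _ = ∑ z, (∑ x, π x z) * condOnFiber σ (q i) (z i) b := by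
          rw [sum_comm]
          simp_rw [sum_mul]
      _ = ∑ c, pushforward σ (q i) c * condOnFiber σ (q i) c b :=
          hπ.sum_sum_mul_apply i fun c => condOnFiber σ (q i) c b
      _ = q i b := sum_pushforward_mul_condOnFiber (hq i) σ b

theorem condEnt_liftCoupling {P : α → ℝ} {π : α → (ι → W) → ℝ}
    (hπ : IsCouplingList (β := fun _ : ι => W) π P fun i => pushforward σ (q i)) :
    condEnt (liftCoupling σ q π) = condEnt π := by
  set g : (ι → W) → ℝ := fun z => ∑ x, π x z * Real.log (π x z / ∑ x', π x' z)
  have hg : ∀ z i, pushforward σ (q i) (z i) = 0 → g z = 0 := fun z i h =>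
    sum_eq_zero fun x _ => by rw [hπ.eq_zero_of_apply_eq_zero h x, zero_mul]
  have hcol : ∀ u, ∑ x, liftCoupling σ q π x u *
      Real.log (liftCoupling σ q π x u / ∑ x', liftCoupling σ q π x' u)
        = ∑ z, g z * ∏ i, condOnFiber σ (q i) (z i) (u i) := by
    intro u
    simp only [liftCoupling, sum_mul_prod_condOnFiber]
    exact sum_mul_const_mul_log_div_sum _ _
  rw [condEnt, condEnt, sum_congr rfl fun u _ => hcol u, sum_sum_mul_prod_condOnFiber σ q g hg]

end Lift

theorem mconvTuple_eq_pushforward {r ℓ : ℕ} [NeZero r] (f : Fin ℓ → Fin r → ℝ) :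
    mconvTuple f = pushforward (fun y : Fin ℓ → Fin r => ∑ j, y j) fun y => ∏ j, f j (y j) := by
  ext z
  simp only [mconvTuple, pushforward]

theorem block_reduction_general (r : ℕ) [NeZero r]
    (n ℓ : ℕ)
    (P : Fin r → ℝ) (hP : IsProbDist P)
    (Q : Fin n × Fin ℓ → Fin r → ℝ) (hQ : ∀ p, IsProbDist (Q p)) :
    Hlist (β := fun _ : Fin n × Fin ℓ => Fin r) P Q
      ≤ Hlist (β := fun _ : Fin n => Fin r) P
          (fun t => mconvTuple (fun j : Fin ℓ => Q (t, j))) := by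
  have hq (t : Fin n) := IsProbDist.pi fun j => hQ (t, j)
  simp only [mconvTuple_eq_pushforward]
  refine Hlist_le_Hlist_of_forall_coupling
    ⟨_, isCouplingList_prod hP fun t => (hq t).pushforward _⟩ fun π hπ => ?_
  have hlift := isCouplingList_liftCoupling _ _ (fun t => (hq t).1) hπ
  refine ⟨_, hlift.curry fun t j c => sum_ite_apply_prod_of_isProbDist (fun j => hQ (t, j)) j c,
    ?_⟩
  exact ((condEnt_comp_equiv _ (Equiv.curry _ _ _)).trans (condEnt_liftCoupling _ _ hπ)).le

/-- block reduction: for `P ∈ Δ([r])` and `Q_1, …, Q_{nℓ} ∈ Δ([r])`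
(coordinates indexed by pairs `(t, j) ∈ [n] × [ℓ]`), with
`R_t` the modular convolution of the `t`-th block,
`H(P‖Q_1,…,Q_{nℓ}) ≤ H(P‖R_1,…,R_n)`. -/
theorem block_reduction (r : ℕ) [NeZero r] (hr : 2 ≤ r)
    (n ℓ : ℕ) (hn : 1 ≤ n) (hℓ : 1 ≤ ℓ)
    (P : Fin r → ℝ) (hP : IsProbDist P)
    (Q : Fin n × Fin ℓ → Fin r → ℝ) (hQ : ∀ p, IsProbDist (Q p)) :
    Hlist (β := fun _ : Fin n × Fin ℓ => Fin r) P Q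
      ≤ Hlist (β := fun _ : Fin n => Fin r) P
          (fun t => mconvTuple (fun j : Fin ℓ => Q (t, j))) :=
  block_reduction_general r n ℓ P hP Q hQ

end
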